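/- In any pca 𝔸, the following are equivalent: (a) the element b with b·a ≃ a·a has no total extension in 𝔸; (b) some element of 𝔸 has no total extension in 𝔸. In particular, if the application function d·⟨a,b⟩ ≃ a·b, viewed via an element d with d·x ≃ (x·U²₁)·(x·U²₂), has a total extension then every element has a total extension. -/

import Mathlib

/-!
If `f` totally extends `b` and `g·x ≃ r x` is total with `b·(r x) ≃ c·x`, then `λx. f·(g·x)`
totally extends `c`. For the diagonal `b` take `r x = λz. c·x`, whose self-application is `c·x`;
for the universal `d` take `r x = ⟨b, x⟩`, on which `d` evaluates to `b·x`.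
-/

/-- Partial application lifted to `Option` (strict: defined iff both sides defined). -/
def pap {A : Type*} (f : A → A → Option A) (x y : Option A) : Option A :=
  x.bind fun a => y.bind fun b => f a b

/-- A partial combinatory algebra, via Feferman's characterization with combinators `k`, `s`. -/
structure PCA (A : Type*) where
  app : A → A → Option A
  k : A
  s : A
  k_spec : ∀ a b : A, pap app (pap app (some k) (some a)) (some b) = some a
  s_defined : ∀ a b : A, (pap app (pap app (some s) (some a)) (some b)).isSome
  s_spec : ∀ a b c : A,
    pap app (pap app (pap app (some s) (some a)) (some b)) (some c)
      = pap app (pap app (some a) (some c)) (pap app (some b) (some c))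

namespace PCA
variable {A : Type*}

/-- Application on (possibly undefined) terms. -/
def ap (P : PCA A) (x y : Option A) : Option A := pap P.app x y

def K' (P : PCA A) : Option A := some P.k
def S' (P : PCA A) : Option A := some P.s
/-- The identity combinator `i = s·k·k`. -/
def i (P : PCA A) : Option A := P.ap (P.ap P.S' P.K') P.K'
/-- `true = k`. -/
def tru (P : PCA A) : Option A := P.K'
/-- `false = k·i`. -/
def fls (P : PCA A) : Option A := P.ap P.K' P.i
/-- Pairing `⟨a,b⟩ = λ*z. z·a·b`, implemented as `s·(s·i·(k·a))·(k·b)`. -/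
def pair (P : PCA A) (x y : Option A) : Option A :=
  P.ap (P.ap P.S' (P.ap (P.ap P.S' P.i) (P.ap P.K' x))) (P.ap P.K' y)
/-- Numerals: `0̄ = i`, `(n+1)‾ = ⟨false, n̄⟩`. -/
def numeral (P : PCA A) : ℕ → Option A
  | 0 => P.i
  | n + 1 => P.pair P.fls (P.numeral n)
/-- An element is total if it is defined on every argument. -/
def total (P : PCA A) (f : A) : Prop := ∀ a : A, (P.app f a).isSome

end PCA

/-- `f` is a total extension of `b` in the pca `P`. -/
def PCA.TotalExt {A : Type*} (P : PCA A) (b f : A) : Prop :=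
  P.total f ∧ ∀ a : A, (P.app b a).isSome → P.app f a = P.app b a

namespace PCA
variable {A : Type*} (P : PCA A)

theorem ap_some_some (a b : A) : P.ap (some a) (some b) = P.app a b := rfl

theorem isSome_app_k (a : A) : (P.app P.k a).isSome := by
  have := P.k_spec a a
  cases h : P.app P.k a <;> simp_all [pap]

def k₁ (a : A) : A := (P.app P.k a).get (P.isSome_app_k a)

theorem app_k (a : A) : P.app P.k a = some (P.k₁ a) := (Option.some_get _).symm

theorem app_k₁ (a b : A) : P.app (P.k₁ a) b = some a := by
  simpa [pap, app_k] using P.k_spec a b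

theorem isSome_app_s (a : A) : (P.app P.s a).isSome := by
  have := P.s_defined a a
  cases h : P.app P.s a <;> simp_all [pap]

def s₁ (a : A) : A := (P.app P.s a).get (P.isSome_app_s a)

theorem app_s (a : A) : P.app P.s a = some (P.s₁ a) := (Option.some_get _).symm

theorem isSome_app_s₁ (a b : A) : (P.app (P.s₁ a) b).isSome := by
  simpa [pap, app_s] using P.s_defined a b

def s₂ (a b : A) : A := (P.app (P.s₁ a) b).get (P.isSome_app_s₁ a b)

theorem app_s₁ (a b : A) : P.app (P.s₁ a) b = some (P.s₂ a b) := (Option.some_get _).symm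

theorem app_s₂ (a b c : A) : P.app (P.s₂ a b) c = P.ap (P.app a c) (P.app b c) := by
  simpa [pap, ap, app_s, app_s₁] using P.s_spec a b c

theorem app_s₂_k_k (a : A) : P.app (P.s₂ P.k P.k) a = some a := by
  rw [app_s₂, app_k, ap_some_some, app_k₁]

theorem i_eq : P.i = some (P.s₂ P.k P.k) := by
  rw [i, S', K', ap_some_some, app_s, ap_some_some, app_s₁]

theorem fls_eq : P.fls = some (P.k₁ (P.s₂ P.k P.k)) := by
  rw [fls, i_eq, K', ap_some_some, app_k]

theorem app_s₂_k₁ (a x z : A) : P.app (P.s₂ a (P.k₁ x)) z = P.ap (P.app a z) (some x) := by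
  rw [app_s₂, app_k₁]

/-- The combinator `C·a`, with `C·a·x·z ≃ a·z·x`. -/
def flip (a : A) : A := P.s₂ (P.k₁ (P.s₁ a)) P.k

theorem app_flip (a x : A) : P.app (P.flip a) x = some (P.s₂ a (P.k₁ x)) := by
  rw [flip, app_s₂, app_k₁, app_k, ap_some_some, app_s₁]

def comp (f g : A) : A := P.s₂ (P.k₁ f) g

theorem app_comp (f g x : A) : P.app (P.comp f g) x = P.ap (some f) (P.app g x) := by
  rw [comp, app_s₂, app_k₁]

variable {P}

theorem TotalExt.exists_of_comp {b c f g : A} (hf : P.TotalExt b f) (r : A → A)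
    (hg : ∀ x, P.app g x = some (r x)) (hr : ∀ x, P.app b (r x) = P.app c x) :
    ∃ h, P.TotalExt c h := by
  have happ (x : A) : P.app (P.comp f g) x = P.app f (r x) := by
    rw [app_comp, hg, ap_some_some]
  refine ⟨P.comp f g, fun x => happ x ▸ hf.1 (r x), fun x hx => ?_⟩
  rw [happ, hf.2 _ (hr x ▸ hx), hr]

theorem exists_totalExt_of_diagonal {b f : A} (hb : ∀ a, P.app b a = P.app a a)
    (hf : P.TotalExt b f) (c : A) : ∃ h, P.TotalExt c h :=
  hf.exists_of_comp _ (P.app_flip (P.k₁ c)) fun x => by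
    rw [hb, app_s₂_k₁, app_k₁, ap_some_some]

theorem exists_totalExt_of_universal {d f : A}
    (hd : ∀ x : A, P.app d x = P.ap (P.ap (some x) P.tru) (P.ap (some x) P.fls))
    (hf : P.TotalExt d f) (b : A) : ∃ h, P.TotalExt b h := by
  set appToB := P.s₂ (P.s₂ P.k P.k) (P.k₁ b)
  have hpair (x z : A) : P.app (P.s₂ appToB (P.k₁ x)) z = P.ap (P.app z b) (some x) := by
    rw [app_s₂_k₁, app_s₂, app_s₂_k_k, app_k₁, ap_some_some]
  refine hf.exists_of_comp _ (P.app_flip appToB) fun x => ?_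
  rw [hd, tru, K', fls_eq, ap_some_some, ap_some_some, hpair, hpair, app_k, app_k₁,
    ap_some_some, app_k₁, ap_some_some, app_s₂_k_k, ap_some_some]

end PCA

/-- The diagonal element has no total extension iff some element has no total
extension; in particular if the universal element has a total extension, then
every element has one. -/
theorem diagonal_no_total_extension_iff {A : Type*} (P : PCA A) :
    (∀ b : A, (∀ a : A, P.app b a = P.app a a) →
      ((¬ ∃ f : A, P.TotalExt b f) ↔ ∃ c : A, ¬ ∃ f : A, P.TotalExt c f)) ∧
    (∀ d : A, (∀ x : A, P.app d x = P.ap (P.ap (some x) P.tru) (P.ap (some x) P.fls)) →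
      (∃ f : A, P.TotalExt d f) → ∀ b : A, ∃ f : A, P.TotalExt b f) := by
  refine ⟨fun b hb => ⟨fun h => ⟨b, h⟩, ?_⟩,
    fun d hd ⟨f, hf⟩ => PCA.exists_totalExt_of_universal hd hf⟩
  rintro ⟨c, hc⟩ ⟨f, hf⟩
  exact hc (PCA.exists_totalExt_of_diagonal hb hf c)
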